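/- Let G = (V, E) be a connected undirected graph and let C be a configuration of the 4-state ambassador protocol on G containing at least one vertex in state (g,1) and at least one vertex in state (r,1). Then there exists a finite sequence of configurations C = C^0, C^1, …, C^s, each directly reachable from the previous one, such that C^s has exactly one fewer vertex in state (g,1) and exactly one fewer vertex in state (r,1) than C has. -/

import Mathlib

/-- States of the ambassador protocol: a colour (`true` = green `g`, `false` = red `r`)
together with an ambassador bit (`true` = the vertex holds an ambassador). -/
abbrev AmbState : Type := Bool × Bool

/-- The transition function of the 4-state ambassador protocol. -/
def ambDelta : AmbState × AmbState → AmbState × AmbState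
  | ((c, true), (_, false)) => ((c, false), (c, true))
  | ((_, false), (c', true)) => ((c', true), (c', false))
  | ((c, true), (c', true)) =>
      if c = c' then ((c, true), (c', true)) else ((c, false), (c', false))
  | (s, s') => (s, s')

/-- One interaction step of a population protocol with transition function `δ` on an
interaction graph with edge relation `E`. -/
def PPStep {V Q : Type*} (E : V → V → Prop) (δ : Q × Q → Q × Q) (C C' : V → Q) : Prop :=
  ∃ v u : V, v ≠ u ∧ E v u ∧ (C' v, C' u) = δ (C v, C u) ∧
    ∀ w : V, w ≠ v → w ≠ u → C' w = C w

open Finset Function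

/-
Walk from a green ambassador to a red ambassador. The green ambassador travels along the
walk: onto an ambassador-free vertex it simply moves, which changes no ambassador count;
reaching a green ambassador, we continue with that one instead; reaching a red ambassador,
the two annihilate, which removes exactly one ambassador of each colour.
-/

section StateCount

variable {V Q : Type*} [Fintype V] [DecidableEq Q]

def stateCount (C : V → Q) (q : Q) : ℕ := #{x | C x = q}

theorem stateCount_update [DecidableEq V] (C : V → Q) (v : V) (a q : Q) :
    stateCount (update C v a) q + (if C v = q then 1 else 0) =
      stateCount C q + (if a = q then 1 else 0) := by
  have hrest : ∑ x ∈ univ.erase v, (if update C v a x = q then 1 else 0) =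
      ∑ x ∈ univ.erase v, (if C x = q then 1 else 0) :=
    sum_congr rfl fun x hx => by rw [update_of_ne (ne_of_mem_erase hx)]
  simp only [stateCount, card_filter]
  rw [← add_sum_erase _ _ (mem_univ v), ← add_sum_erase _ _ (mem_univ v), hrest, update_self]
  ring

theorem stateCount_update_update [DecidableEq V] (C : V → Q) {v w : V} (hvw : v ≠ w)
    (a b q : Q) :
    stateCount (update (update C v a) w b) q + (if C v = q then 1 else 0) +
        (if C w = q then 1 else 0) =
      stateCount C q + (if a = q then 1 else 0) + (if b = q then 1 else 0) := by
  have hw := stateCount_update (update C v a) w b q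
  have hv := stateCount_update C v a q
  rw [update_of_ne hvw.symm] at hw
  omega

end StateCount

theorem ppStep_update_update {V Q : Type*} [DecidableEq V] {E : V → V → Prop}
    {δ : Q × Q → Q × Q} {C : V → Q} {v w : V} {a b : Q} (hvw : v ≠ w) (hE : E v w)
    (hδ : δ (C v, C w) = (a, b)) :
    PPStep E δ C (update (update C v a) w b) := by
  refine ⟨v, w, hvw, hE, ?_, fun x hxv hxw => ?_⟩
  · rw [update_self, update_of_ne hvw, update_self, hδ]
  · rw [update_of_ne hxw, update_of_ne hxv]

section Annihilation

variable {V : Type} [Fintype V] (G : SimpleGraph V)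

def AnnihilationReachable (C : V → AmbState) : Prop :=
  ∃ C' : V → AmbState, Relation.ReflTransGen (PPStep G.Adj ambDelta) C C' ∧
    stateCount C' (true, true) + 1 = stateCount C (true, true) ∧
    stateCount C' (false, true) + 1 = stateCount C (false, true)

variable {G}

theorem AnnihilationReachable.head {C C₂ : V → AmbState} (hstep : PPStep G.Adj ambDelta C C₂)
    (hg : stateCount C₂ (true, true) = stateCount C (true, true))
    (hr : stateCount C₂ (false, true) = stateCount C (false, true))
    (h₂ : AnnihilationReachable G C₂) : AnnihilationReachable G C := by
  obtain ⟨C', hreach, hg', hr'⟩ := h₂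
  exact ⟨C', hreach.head hstep, hg ▸ hg', hr ▸ hr'⟩

theorem annihilationReachable_of_adj [DecidableEq V] {C : V → AmbState} {v w : V}
    (hadj : G.Adj v w) (hv : C v = (true, true)) (hw : C w = (false, true)) :
    AnnihilationReachable G C := by
  have hvw := hadj.ne
  refine ⟨update (update C v (true, false)) w (false, false),
    .single (ppStep_update_update hvw hadj (by rw [hv, hw]; rfl)), ?_, ?_⟩
  · have := stateCount_update_update C hvw (true, false) (false, false) (true, true)
    simpa [hv, hw] using this
  · have := stateCount_update_update C hvw (true, false) (false, false) (false, true)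
    simpa [hv, hw] using this

theorem AnnihilationReachable.of_move [DecidableEq V] {C : V → AmbState} {v w : V} {c : Bool}
    (hadj : G.Adj v w) (hv : C v = (true, true)) (hw : C w = (c, false))
    (h : AnnihilationReachable G (update (update C v (true, false)) w (true, true))) :
    AnnihilationReachable G C := by
  have hvw := hadj.ne
  refine h.head (ppStep_update_update hvw hadj (by rw [hv, hw]; cases c <;> rfl)) ?_ ?_
  · have := stateCount_update_update C hvw (true, false) (true, true) (true, true)
    simpa [hv, hw] using this
  · have := stateCount_update_update C hvw (true, false) (true, true) (false, true)
    simpa [hv, hw] using this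

theorem annihilationReachable_of_walk [DecidableEq V] {v u : V} (p : G.Walk v u) :
    ∀ C : V → AmbState, C v = (true, true) → C u = (false, true) →
      AnnihilationReachable G C := by
  induction p with
  | nil =>
    intro C hv hu
    simp [hv] at hu
  | @cons v w u hadj q ih =>
    intro C hv hu
    rcases hw : C w with ⟨c, _ | _⟩
    · refine .of_move hadj hv hw (ih _ (update_self ..) ?_)
      have huv : u ≠ v := by rintro rfl; simp [hv] at hu
      have huw : u ≠ w := by rintro rfl; simp [hw] at hu
      rwa [update_of_ne huw, update_of_ne huv]
    · cases c
      · exact annihilationReachable_of_adj hadj hv hw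
      · exact ih C hw hu

end Annihilation

theorem stmt_11_general {V : Type} [Fintype V] (G : SimpleGraph V)
    (hconn : G.Connected) (C : V → AmbState)
    (hg : ∃ v : V, C v = (true, true)) (hr : ∃ v : V, C v = (false, true)) :
    ∃ C' : V → AmbState,
      Relation.ReflTransGen (PPStep G.Adj ambDelta) C C' ∧
      (Finset.univ.filter fun v => C' v = (true, true)).card + 1 =
        (Finset.univ.filter fun v => C v = (true, true)).card ∧
      (Finset.univ.filter fun v => C' v = (false, true)).card + 1 =
        (Finset.univ.filter fun v => C v = (false, true)).card := by
  classical
  obtain ⟨v, hv⟩ := hg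
  obtain ⟨u, hu⟩ := hr
  obtain ⟨p⟩ := hconn v u
  exact annihilationReachable_of_walk p C hv hu

/-- From any configuration of the ambassador protocol on a connected graph containing at
least one green ambassador and at least one red ambassador, a finite chain of interaction
steps reaches a configuration with exactly one fewer green ambassador and exactly one
fewer red ambassador. -/
theorem stmt_11 {V : Type} [Fintype V] [DecidableEq V] (G : SimpleGraph V)
    (hconn : G.Connected) (C : V → AmbState)
    (hg : ∃ v : V, C v = (true, true)) (hr : ∃ v : V, C v = (false, true)) :
    ∃ C' : V → AmbState,
      Relation.ReflTransGen (PPStep G.Adj ambDelta) C C' ∧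
      (Finset.univ.filter fun v => C' v = (true, true)).card + 1 =
        (Finset.univ.filter fun v => C v = (true, true)).card ∧
      (Finset.univ.filter fun v => C' v = (false, true)).card + 1 =
        (Finset.univ.filter fun v => C v = (false, true)).card :=
  stmt_11_general G hconn C hg hr
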